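/- Let a ≥ 1 and t > 0, and for b ≥ 1 define q_b(y, t) = (e^{-t/4} / √(4πt)) · y · (1 − e^{-(log(y/b))^2 / t}) for y ≥ b and q_b(y, t) = 0 for 1 ≤ y < b. Then the function y ↦ (q_a(y, t) − q_1(y, t)) · y^{-2} is integrable on [1, ∞) and ∫_1^∞ (q_a(y, t) − q_1(y, t)) · y^{-2} dy = −(1/√(4πt)) · e^{-t/4} · log a. (This integral is the relative heat trace Tr(e^{-tΔ_{a,0}} − e^{-tΔ_{1,0}}) of the model cusp operators.) -/

import Mathlib

open MeasureTheory

/-- The diagonal of the Dirichlet heat kernel of `Δ_{b,0} = −y² d²/dy²` on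
`L²([b,∞), y⁻²dy)`, extended by `0` for `y < b`. -/
noncomputable def cuspHeatDiag (b y t : ℝ) : ℝ :=
  if b ≤ y then
    (Real.exp (-t / 4) / Real.sqrt (4 * Real.pi * t)) * y *
      (1 - Real.exp (-(Real.log (y / b)) ^ 2 / t))
  else 0

/-!
With `C = e^{-t/4} / √(4πt)` and the profile `ψ(s) = 1 - e^{-max(s, 0)² / t}`, which is
continuous, nondecreasing, zero for `s ≤ 0` and tends to `1` with integrable defect, one has
`q_b(y, t) / y² = C ψ(log y - log b) / y` for every `y > 0`; the truncation at `y = b` is thus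
absorbed into `ψ`. Hence the integrand is the derivative of `-C ∫_{log y - log a}^{log y} ψ`,
which vanishes at `y = 1` and tends to `-C log a` as `y → ∞`, since the window of length
`log a` slides into the region where `ψ ≈ 1`. The integrand is nonpositive, so this
antiderivative also gives integrability.
-/

open Real Set Filter Topology

section Window

variable {f : ℝ → ℝ}

theorem hasDerivAt_intervalIntegral_window (hf : Continuous f) (L u : ℝ) :
    HasDerivAt (fun v => ∫ s in v - L..v, f s) (f u - f (u - L)) u := by
  have hsplit : (fun v => ∫ s in v - L..v, f s) =
      fun v => (∫ s in (0 : ℝ)..v, f s) - ∫ s in (0 : ℝ)..(v - L), f s := by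
    ext v
    rw [intervalIntegral.integral_interval_sub_left (hf.intervalIntegrable _ _)
      (hf.intervalIntegrable _ _)]
  rw [hsplit]
  refine (hf.integral_hasStrictDerivAt 0 u).hasDerivAt.sub ?_
  exact (hf.integral_hasStrictDerivAt 0 (u - L)).hasDerivAt.comp_sub_const u L

theorem tendsto_intervalIntegral_window {ℓ c : ℝ} (hf : Continuous f)
    (hint : IntegrableOn (fun s => f s - ℓ) (Ioi c)) (L : ℝ) :
    Tendsto (fun v => ∫ s in v - L..v, f s) atTop (𝓝 (L * ℓ)) := by
  have hcont : Continuous fun s => f s - ℓ := hf.sub continuous_const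
  have hdefect : Tendsto (fun v => ∫ s in v - L..v, f s - ℓ) atTop (𝓝 0) := by
    have h₁ := intervalIntegral_tendsto_integral_Ioi c hint tendsto_id
    have h₂ := intervalIntegral_tendsto_integral_Ioi c hint
      (tendsto_atTop_add_const_right _ (-L) tendsto_id)
    rw [← sub_self (∫ s in Ioi c, f s - ℓ)]
    refine (h₁.sub h₂).congr fun v => ?_
    rw [← sub_eq_add_neg, intervalIntegral.integral_interval_sub_left
      (hcont.intervalIntegrable _ _) (hcont.intervalIntegrable _ _)]
    rfl
  rw [← add_zero (L * ℓ)]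
  refine (hdefect.const_add (L * ℓ)).congr fun v => ?_
  rw [intervalIntegral.integral_sub (hf.intervalIntegrable _ _) intervalIntegrable_const,
    intervalIntegral.integral_const, smul_eq_mul]
  ring

end Window

noncomputable def cuspProfile (t s : ℝ) : ℝ :=
  1 - exp (-(max s 0) ^ 2 / t)

section Profile

variable {t : ℝ}

theorem continuous_cuspProfile : Continuous (cuspProfile t) := by
  unfold cuspProfile
  fun_prop

theorem cuspProfile_of_nonpos {s : ℝ} (hs : s ≤ 0) : cuspProfile t s = 0 := by
  simp [cuspProfile, max_eq_right hs]

theorem monotone_cuspProfile (ht : 0 ≤ t) : Monotone (cuspProfile t) := by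
  intro s s' hss'
  have hmax : max s 0 ^ 2 ≤ max s' 0 ^ 2 :=
    pow_le_pow_left₀ (le_max_right _ _) (max_le_max_right 0 hss') 2
  unfold cuspProfile
  gcongr

theorem integrableOn_cuspProfile_sub_one (ht : 0 < t) :
    IntegrableOn (fun s => cuspProfile t s - 1) (Ioi 0) := by
  have hgauss : Integrable fun s : ℝ => -exp (-(1 / t) * s ^ 2) :=
    (integrable_exp_neg_mul_sq (by positivity)).neg
  refine hgauss.integrableOn.congr_fun (fun s (hs : 0 < s) => ?_) measurableSet_Ioi
  simp only [cuspProfile, max_eq_left hs.le]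
  ring_nf

theorem cuspHeatDiag_div_sq {b y : ℝ} (hb : 0 < b) (hy : 0 < y) :
    cuspHeatDiag b y t / y ^ 2 =
      exp (-t / 4) / sqrt (4 * π * t) * cuspProfile t (log y - log b) / y := by
  rw [cuspHeatDiag, ← log_div hy.ne' hb.ne']
  split_ifs with hby
  · rw [cuspProfile, max_eq_left (log_nonneg ((one_le_div hb).2 hby))]
    field_simp
  · have hlt : y / b < 1 := (div_lt_one hb).2 (not_le.1 hby)
    rw [cuspProfile_of_nonpos (log_nonpos (div_pos hy hb).le hlt.le)]
    simp

theorem cuspHeatDiag_sub_div_sq {a y : ℝ} (ha : 0 < a) (hy : 0 < y) :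
    (cuspHeatDiag a y t - cuspHeatDiag 1 y t) / y ^ 2 =
      -(exp (-t / 4) / sqrt (4 * π * t)) *
        ((cuspProfile t (log y) - cuspProfile t (log y - log a)) * y⁻¹) := by
  rw [sub_div, cuspHeatDiag_div_sq ha hy, cuspHeatDiag_div_sq one_pos hy, log_one, sub_zero]
  ring

theorem cuspHeatDiag_sub_div_sq_nonpos (ht : 0 ≤ t) {a y : ℝ} (ha : 1 ≤ a) (hy : 0 < y) :
    (cuspHeatDiag a y t - cuspHeatDiag 1 y t) / y ^ 2 ≤ 0 := by
  rw [cuspHeatDiag_sub_div_sq (by linarith) hy, neg_mul, neg_nonpos]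
  have hmono := monotone_cuspProfile ht (sub_le_self (log y) (log_nonneg ha))
  exact mul_nonneg (by positivity) (mul_nonneg (sub_nonneg.2 hmono) (inv_nonneg.2 hy.le))

end Profile

/-- The relative heat trace of the model cusp operators:
`Tr(e^{-tΔ_{a,0}} − e^{-tΔ_{1,0}}) = ∫_1^∞ (q_a(y,t) − q_1(y,t)) y⁻² dy
  = −(1/√(4πt)) e^{-t/4} log a`. -/
theorem relative_heat_trace_model_cusp (a t : ℝ) (ha : 1 ≤ a) (ht : 0 < t) :
    IntegrableOn (fun y : ℝ => (cuspHeatDiag a y t - cuspHeatDiag 1 y t) / y ^ 2)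
      (Set.Ici 1) ∧
    ∫ y in Set.Ici (1 : ℝ), (cuspHeatDiag a y t - cuspHeatDiag 1 y t) / y ^ 2 =
      -(1 / Real.sqrt (4 * Real.pi * t)) * Real.exp (-t / 4) * Real.log a := by
  set C := exp (-t / 4) / sqrt (4 * π * t) with hC
  set W := fun u => ∫ s in u - log a..u, cuspProfile t s
  have hderiv : ∀ y ∈ Ici (1 : ℝ), HasDerivAt (fun y => -C * W (log y))
      ((cuspHeatDiag a y t - cuspHeatDiag 1 y t) / y ^ 2) y := fun y hy => by
    have hy : (0 : ℝ) < y := one_pos.trans_le hy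
    rw [cuspHeatDiag_sub_div_sq (by linarith) hy]
    exact ((hasDerivAt_intervalIntegral_window continuous_cuspProfile _ _).comp y
      (hasDerivAt_log hy.ne')).const_mul (-C)
  have hnonpos : ∀ y ∈ Ioi (1 : ℝ), (cuspHeatDiag a y t - cuspHeatDiag 1 y t) / y ^ 2 ≤ 0 :=
    fun y hy => cuspHeatDiag_sub_div_sq_nonpos ht.le ha (one_pos.trans hy)
  have hlim : Tendsto (fun y => -C * W (log y)) atTop (𝓝 (-C * log a)) := by
    simpa using ((tendsto_intervalIntegral_window continuous_cuspProfile
      (integrableOn_cuspProfile_sub_one ht) (log a)).comp tendsto_log_atTop).const_mul (-C)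
  have hW0 : W (log 1) = 0 := by
    refine (intervalIntegral.integral_congr (g := fun _ => 0) fun s hs =>
      cuspProfile_of_nonpos ?_).trans intervalIntegral.integral_zero
    rw [log_one, zero_sub] at hs
    exact hs.2.trans (max_le (neg_nonpos.2 (log_nonneg ha)) le_rfl)
  rw [integrableOn_Ici_iff_integrableOn_Ioi, integral_Ici_eq_integral_Ioi,
    integral_Ioi_of_hasDerivAt_of_nonpos' hderiv hnonpos hlim, hW0, hC]
  exact ⟨integrableOn_Ioi_deriv_of_nonpos' hderiv hnonpos hlim, by ring⟩
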